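/- The disjunctive rule l₁ ∧ ... ∧ lₘ → a₁ ∨ ... ∨ aₙ (n > 0, m ≥ 0, with a₁,...,aₙ atoms and l₁,...,lₘ literals) is strongly equivalent to the set of n implications (l₁ ∧ ... ∧ lₘ ∧ (a₁ → aᵢ) ∧ ... ∧ (aₙ → aᵢ)) → aᵢ for i = 1,...,n; equivalently, for every set X of atoms, the reducts of these two theories relative to X are classically equivalent. -/
import Mathlib


inductive PForm (α : Type) : Type where
  | bot : PForm α
  | atom : α → PForm α
  | and : PForm α → PForm α → PForm α
  | or : PForm α → PForm α → PForm α
  | imp : PForm α → PForm α → PForm α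

namespace PForm

variable {α : Type}

def top : PForm α := imp bot bot

def neg (F : PForm α) : PForm α := imp F bot

def sat (X : Set α) : PForm α → Prop
  | bot => False
  | atom a => a ∈ X
  | and F G => sat X F ∧ sat X G
  | or F G => sat X F ∨ sat X G
  | imp F G => sat X F → sat X G

open Classical in
noncomputable def reduct (X : Set α) : PForm α → PForm α
  | bot => bot
  | atom a => if a ∈ X then atom a else bot
  | and F G => if sat X (and F G) then and (reduct X F) (reduct X G) else bot
  | or F G => if sat X (or F G) then or (reduct X F) (reduct X G) else bot
  | imp F G => if sat X (imp F G) then imp (reduct X F) (reduct X G) else bot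

def headAtoms : PForm α → Set α
  | bot => ∅
  | atom a => {a}
  | and F G => headAtoms F ∪ headAtoms G
  | or F G => headAtoms F ∪ headAtoms G
  | imp _ G => headAtoms G

def atomsOf : PForm α → Set α
  | bot => ∅
  | atom a => {a}
  | and F G => atomsOf F ∪ atomsOf G
  | or F G => atomsOf F ∪ atomsOf G
  | imp F G => atomsOf F ∪ atomsOf G

def htSat (X Y : Set α) : PForm α → Prop
  | bot => False
  | atom a => a ∈ X
  | and F G => htSat X Y F ∧ htSat X Y G
  | or F G => htSat X Y F ∨ htSat X Y G
  | imp F G => (htSat X Y F → htSat X Y G) ∧ sat Y (imp F G)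

end PForm

variable {α : Type}

/-- Satisfaction of a theory (set of formulas). -/
def satTh (X : Set α) (Γ : Set (PForm α)) : Prop := ∀ F ∈ Γ, PForm.sat X F

/-- The reduct of a theory relative to X. -/
noncomputable def reductTh (X : Set α) (Γ : Set (PForm α)) : Set (PForm α) :=
  PForm.reduct X '' Γ

/-- X is a stable model of Γ iff X is a minimal set satisfying Γ^X. -/
def StableModel (Γ : Set (PForm α)) (X : Set α) : Prop :=
  satTh X (reductTh X Γ) ∧ ∀ Y : Set α, Y ⊂ X → ¬ satTh Y (reductTh X Γ)

def htSatTh (X Y : Set α) (Γ : Set (PForm α)) : Prop := ∀ F ∈ Γ, PForm.htSat X Y F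

def theoryHeadAtoms (Γ : Set (PForm α)) : Set α := ⋃ F ∈ Γ, PForm.headAtoms F

def listAnd : List (PForm α) → PForm α
  | [] => PForm.top
  | F :: l => PForm.and F (listAnd l)

def listOr : List (PForm α) → PForm α
  | [] => PForm.bot
  | F :: l => PForm.or F (listOr l)

def IsLiteral (F : PForm α) : Prop :=
  (∃ a : α, F = PForm.atom a) ∨ (∃ a : α, F = PForm.neg (PForm.atom a))

section Aux

variable {X Y : Set α}

lemma sat_of_sat_reduct : ∀ F : PForm α, PForm.sat Y (PForm.reduct X F) → PForm.sat X F := by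
  intro F
  induction F with
  | bot => simp [PForm.reduct, PForm.sat]
  | atom a =>
    simp only [PForm.reduct]
    split_ifs with h
    · intro _; exact h
    · simp [PForm.sat]
  | and F G _ _ =>
    simp only [PForm.reduct]
    split_ifs with h
    · intro _; exact h
    · simp [PForm.sat]
  | or F G _ _ =>
    simp only [PForm.reduct]
    split_ifs with h
    · intro _; exact h
    · simp [PForm.sat]
  | imp F G _ _ =>
    simp only [PForm.reduct]
    split_ifs with h
    · intro _; exact h
    · simp [PForm.sat]

lemma sat_reduct_atom (a : α) :
    PForm.sat Y (PForm.reduct X (PForm.atom a)) ↔ a ∈ X ∧ a ∈ Y := by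
  simp only [PForm.reduct]
  split_ifs with h <;> simp [PForm.sat, h]

lemma sat_reduct_and (F G : PForm α) :
    PForm.sat Y (PForm.reduct X (PForm.and F G)) ↔
      PForm.sat Y (PForm.reduct X F) ∧ PForm.sat Y (PForm.reduct X G) := by
  simp only [PForm.reduct]
  split_ifs with h
  · simp [PForm.sat]
  · simp only [PForm.sat, false_iff]
    rintro ⟨hF, hG⟩
    exact h ⟨sat_of_sat_reduct F hF, sat_of_sat_reduct G hG⟩

lemma sat_reduct_or (F G : PForm α) :
    PForm.sat Y (PForm.reduct X (PForm.or F G)) ↔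
      PForm.sat Y (PForm.reduct X F) ∨ PForm.sat Y (PForm.reduct X G) := by
  simp only [PForm.reduct]
  split_ifs with h
  · simp [PForm.sat]
  · simp only [PForm.sat, false_iff]
    rintro (hF | hG)
    · exact h (Or.inl (sat_of_sat_reduct F hF))
    · exact h (Or.inr (sat_of_sat_reduct G hG))

lemma sat_reduct_imp (F G : PForm α) :
    PForm.sat Y (PForm.reduct X (PForm.imp F G)) ↔
      PForm.sat X (PForm.imp F G) ∧
        (PForm.sat Y (PForm.reduct X F) → PForm.sat Y (PForm.reduct X G)) := by
  simp only [PForm.reduct]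
  split_ifs with h
  · simp only [PForm.sat] at h ⊢; tauto
  · simp only [PForm.sat, false_iff]
    rintro ⟨h1, _⟩
    exact h h1

lemma sat_listAnd (L : List (PForm α)) :
    PForm.sat X (listAnd L) ↔ ∀ F ∈ L, PForm.sat X F := by
  induction L with
  | nil => simp [listAnd, PForm.top, PForm.sat]
  | cons F L ih => simp [listAnd, PForm.sat, ih]

lemma sat_listOr (L : List (PForm α)) :
    PForm.sat X (listOr L) ↔ ∃ F ∈ L, PForm.sat X F := by
  induction L with
  | nil => simp [listOr, PForm.sat]
  | cons F L ih => simp [listOr, PForm.sat, ih]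

lemma sat_reduct_listAnd (L : List (PForm α)) :
    PForm.sat Y (PForm.reduct X (listAnd L)) ↔
      ∀ F ∈ L, PForm.sat Y (PForm.reduct X F) := by
  induction L with
  | nil => simp [listAnd, PForm.top, PForm.reduct, PForm.sat]
  | cons F L ih => simp [listAnd, sat_reduct_and, ih]

lemma sat_reduct_listOr (L : List (PForm α)) :
    PForm.sat Y (PForm.reduct X (listOr L)) ↔
      ∃ F ∈ L, PForm.sat Y (PForm.reduct X F) := by
  induction L with
  | nil => simp [listOr, PForm.reduct, PForm.sat]
  | cons F L ih => simp [listOr, sat_reduct_or, ih]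

lemma satTh_reduct_single (F : PForm α) :
    satTh Y (reductTh X {F}) ↔ PForm.sat Y (PForm.reduct X F) := by
  simp [satTh, reductTh]

lemma satTh_reduct_setOf (as : List α) (f : α → PForm α) :
    satTh Y (reductTh X {G | ∃ a ∈ as, G = f a}) ↔
      ∀ a ∈ as, PForm.sat Y (PForm.reduct X (f a)) := by
  constructor
  · intro h a ha
    exact h _ ⟨f a, ⟨a, ha, rfl⟩, rfl⟩
  · rintro h F ⟨G, ⟨a, ha, rfl⟩, rfl⟩
    exact h a ha

end Aux

/-- a disjunctive rule is strongly equivalent to the n implications. -/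
theorem stmt12 (l : List (PForm α)) (hl : ∀ F ∈ l, IsLiteral F)
    (as : List α) (has : as ≠ []) :
    ∀ X Y : Set α,
      satTh Y (reductTh X
        {PForm.imp (listAnd l) (listOr (as.map PForm.atom))}) ↔
      satTh Y (reductTh X
        {G | ∃ a ∈ as, G =
          PForm.imp
            (PForm.and (listAnd l)
              (listAnd (as.map (fun b => PForm.imp (PForm.atom b) (PForm.atom a)))))
            (PForm.atom a)}) := by
  intro X Y
  rw [satTh_reduct_single, satTh_reduct_setOf]
  simp only [sat_reduct_imp, sat_reduct_and, sat_reduct_listAnd, sat_reduct_listOr,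
    sat_reduct_atom, PForm.sat, sat_listAnd, sat_listOr, List.mem_map,
    forall_exists_index, and_imp, exists_exists_and_eq_and, forall_apply_eq_imp_iff₂]
  -- now a propositional statement
  constructor
  · rintro ⟨h1, h2⟩ a ha
    constructor
    · rintro hs hall
      obtain ⟨b, hb, hbX⟩ := h1 hs
      exact hall b hb hbX
    · rintro hc hall
      obtain ⟨b, hb, hAb⟩ := h2 hc
      exact (hall b hb).2 hAb.1 hAb.2
  · intro h
    have hcs : (∀ F ∈ l, PForm.sat Y (PForm.reduct X F)) → ∀ F ∈ l, PForm.sat X F :=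
      fun hc F hF => sat_of_sat_reduct F (hc F hF)
    have H1 : (∀ F ∈ l, PForm.sat X F) → ∃ a ∈ as, a ∈ X := by
      intro hs
      by_contra hn
      push_neg at hn
      obtain ⟨a, ha⟩ := List.exists_mem_of_ne_nil as has
      exact hn a ha ((h a ha).1 hs (fun b hb hbX => absurd hbX (hn b hb)))
    refine ⟨H1, ?_⟩
    intro hc
    by_contra hn
    have hn' : ∀ a ∈ as, ¬(a ∈ X ∧ a ∈ Y) := by
      intro a ha hA
      exact hn ⟨a, ha, hA⟩
    have hs : ∀ F ∈ l, PForm.sat X F := hcs hc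
    obtain ⟨a, ha, haX⟩ := H1 hs
    refine hn' a ha ?_
    exact (h a ha).2 hc (fun b hb =>
      ⟨fun _ => haX, fun hbX hbY => absurd ⟨hbX, hbY⟩ (hn' b hb)⟩)
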